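/- Fix q ∈ (0,1) and r ≥ 1. Then ∫_{[0,1]^r} q^{x_1} ∏_{i=2}^r (q^{x_i} q^{1[x_i < x_{i-1}]}) dx_1...dx_r = C_q^{-r} A_r(q)/r!, where C_q = log(1/q)/(1-q) and A_r(q) is the r-th Eulerian polynomial Σ_{σ ∈ S_r} q^{d(σ)}. -/

import Mathlib

open MeasureTheory

/-- Number of descents of a permutation of `Fin r`. -/
def descentNum {r : ℕ} (σ : Equiv.Perm (Fin r)) : ℕ :=
  (Finset.univ.filter (fun p : Fin r × Fin r =>
    (p.2 : ℕ) = (p.1 : ℕ) + 1 ∧ σ p.2 < σ p.1)).card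

/-- The `r`-th Eulerian polynomial `A_r(q) = Σ_{σ ∈ S_r} q^{d(σ)}`. -/
noncomputable def eulerianPoly (r : ℕ) (q : ℝ) : ℝ :=
  ∑ σ : Equiv.Perm (Fin r), q ^ descentNum σ

/-- Number of descents of the sequence `x_1, …, x_r`: indices `i ≥ 2` with `x_i < x_{i-1}`. -/
noncomputable def seqDescentNum {r : ℕ} (x : Fin r → ℝ) : ℕ :=
  (Finset.univ.filter (fun p : Fin r × Fin r =>
    (p.2 : ℕ) = (p.1 : ℕ) + 1 ∧ x p.2 < x p.1)).card

/-!
Almost every point of `ℝ^r` has distinct coordinates, and is then sorted by a unique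
permutation `σ`; the sequence `x` has the descents of `σ⁻¹`. Splitting `ℝ^r` into the
images of the sorted chamber under the permutations, a permutation-invariant `f` gives
`∫ f · q^{des} = A_r(q) · ∫_{chamber} f`, and the case `q = 1` gives
`∫ f = r! · ∫_{chamber} f`. For `f` the indicator of the cube times `q^{Σ xᵢ}` the integral
factors as `(∫₀¹ q^t dt)^r = C_q^{-r}`.
-/

open Function Equiv

theorem ae_injective {ι : Type*} [Fintype ι] (μ : Measure (ι → ℝ)) [μ.IsAddHaarMeasure] :
    ∀ᵐ x ∂μ, Injective x := by
  classical
  simp only [Injective, ae_all_iff]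
  intro i j
  by_cases hij : i = j
  · exact .of_forall fun _ _ => hij
  let diag : Submodule ℝ (ι → ℝ) :=
    LinearMap.ker (LinearMap.proj (R := ℝ) (φ := fun _ => ℝ) i - LinearMap.proj j)
  have hdiag : diag ≠ ⊤ := fun h => by
    have : Pi.single (M := fun _ => ℝ) i 1 ∈ diag := h ▸ Submodule.mem_top
    simp [diag, Ne.symm hij] at this
  filter_upwards [measure_eq_zero_iff_ae_notMem.1 (Measure.addHaar_submodule μ diag hdiag)]
    with x hx hxij
  exact absurd (by simp [diag, hxij]) hx

theorem strictMono_comp_iff_eq_sort {α : Type*} [LinearOrder α] {r : ℕ} {x : Fin r → α}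
    (hx : Injective x) (σ : Perm (Fin r)) : StrictMono (x ∘ σ) ↔ σ = Tuple.sort x := by
  rw [Tuple.eq_sort_iff]
  refine ⟨fun h => ⟨h.monotone, fun i j hij hx' => absurd (σ.injective (hx hx')) hij.ne⟩,
    fun h => h.1.strictMono_of_injective (hx.comp σ.injective)⟩

theorem measurableSet_strictMono {r : ℕ} : MeasurableSet {x : Fin r → ℝ | StrictMono x} := by
  simp only [StrictMono, Set.ofPred_forall]
  exact .iInter fun a => .iInter fun b => .iInter fun _ =>
    measurableSet_lt (measurable_pi_apply a) (measurable_pi_apply b)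

theorem setIntegral_strictMono_comp {E : Type*} [NormedAddCommGroup E] [NormedSpace ℝ E] {r : ℕ}
    (g : (Fin r → ℝ) → E) (σ : Perm (Fin r)) :
    ∫ x in {x | StrictMono (x ∘ σ)}, g x
      = ∫ y in {y | StrictMono y}, g (y ∘ ⇑σ⁻¹) := by
  let e := MeasurableEquiv.arrowCongr' σ.symm (MeasurableEquiv.refl ℝ)
  have he : MeasurePreserving e := volume_preserving_arrowCongr' _ _ (.id volume)
  have he_apply : ∀ x, e x = x ∘ σ := fun _ => rfl
  rw [← he.setIntegral_preimage_emb e.measurableEmbedding (fun y => g (y ∘ ⇑σ⁻¹))]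
  simp only [he_apply, comp_assoc, Perm.coe_inv, self_comp_symm, comp_id]
  rfl

theorem integral_eq_sum_perm_setIntegral_strictMono {E : Type*} [NormedAddCommGroup E]
    [NormedSpace ℝ E] {r : ℕ} {g : (Fin r → ℝ) → E} (hg : Integrable g) :
    ∫ x, g x = ∑ σ : Perm (Fin r), ∫ y in {y | StrictMono y}, g (y ∘ σ) := by
  have hmeas (σ : Perm (Fin r)) : MeasurableSet {x : Fin r → ℝ | StrictMono (x ∘ σ)} :=
    measurableSet_strictMono.preimage (measurable_pi_lambda _ fun i => measurable_pi_apply (σ i))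
  have hsplit :
      g =ᵐ[volume] fun x => ∑ σ : Perm (Fin r), {x | StrictMono (x ∘ σ)}.indicator g x := by
    filter_upwards [ae_injective (volume : Measure (Fin r → ℝ))] with x hx
    simp [Set.indicator_apply, strictMono_comp_iff_eq_sort hx]
  rw [integral_congr_ae hsplit, integral_finsetSum _ fun σ _ => hg.indicator (hmeas σ)]
  refine Fintype.sum_equiv (Equiv.inv _) _ _ fun σ => ?_
  rw [integral_indicator (hmeas σ), setIntegral_strictMono_comp, Equiv.inv_apply]

theorem seqDescentNum_comp_of_strictMono {r : ℕ} {y : Fin r → ℝ} (hy : StrictMono y)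
    (σ : Perm (Fin r)) : seqDescentNum (y ∘ σ) = descentNum σ := by
  simp only [seqDescentNum, descentNum, comp_apply, hy.lt_iff_lt]

theorem measurable_seqDescentNum {r : ℕ} :
    Measurable (seqDescentNum : (Fin r → ℝ) → ℕ) := by
  classical
  unfold seqDescentNum
  simp only [Finset.card_filter]
  refine Finset.measurable_sum _ fun p _ => Measurable.ite ?_ measurable_const measurable_const
  exact (MeasurableSet.const _).inter
    (measurableSet_lt (measurable_pi_apply _) (measurable_pi_apply _))

theorem MeasureTheory.Integrable.mul_pow_seqDescentNum {r : ℕ} {f : (Fin r → ℝ) → ℝ}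
    (hf : Integrable f) (q : ℝ) :
    Integrable fun x => f x * q ^ seqDescentNum x := by
  refine hf.mul_bdd ((measurable_from_nat.comp measurable_seqDescentNum).aestronglyMeasurable)
    (c := max 1 |q| ^ Fintype.card (Fin r × Fin r)) (.of_forall fun x => ?_)
  rw [norm_pow, Real.norm_eq_abs]
  calc |q| ^ seqDescentNum x ≤ max 1 |q| ^ seqDescentNum x :=
        pow_le_pow_left₀ (abs_nonneg q) (le_max_right 1 |q|) _
    _ ≤ max 1 |q| ^ Fintype.card (Fin r × Fin r) :=
        pow_le_pow_right₀ (le_max_left 1 |q|) (Finset.card_le_univ _)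

theorem integral_mul_pow_seqDescentNum {r : ℕ} {f : (Fin r → ℝ) → ℝ} (hf : Integrable f)
    (hf_perm : ∀ (σ : Perm (Fin r)) x, f (x ∘ σ) = f x) (q : ℝ) :
    ∫ x, f x * q ^ seqDescentNum x = eulerianPoly r q * (∫ x, f x) / r.factorial := by
  set J := ∫ y in {y : Fin r → ℝ | StrictMono y}, f y
  have hf_eq : ∫ x, f x = r.factorial * J := by
    simp [integral_eq_sum_perm_setIntegral_strictMono hf, hf_perm, Fintype.card_perm, J]
  have hfq_eq : ∫ x, f x * q ^ seqDescentNum x = eulerianPoly r q * J := by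
    rw [integral_eq_sum_perm_setIntegral_strictMono (hf.mul_pow_seqDescentNum q), eulerianPoly,
      Finset.sum_mul]
    refine Finset.sum_congr rfl fun σ _ => ?_
    rw [← integral_const_mul]
    refine setIntegral_congr_fun measurableSet_strictMono fun y hy => ?_
    rw [hf_perm, seqDescentNum_comp_of_strictMono hy, mul_comm]
  rw [hfq_eq, hf_eq]
  field_simp

theorem setIntegral_univ_pi_rpow_sum {ι : Type*} [Fintype ι] {q : ℝ} (hq : 0 < q)
    (s : Set ℝ) :
    ∫ x in Set.univ.pi (fun _ : ι => s), q ^ ∑ i, x i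
      = (∫ t in s, q ^ t) ^ Fintype.card ι := by
  simp only [Real.rpow_sum_of_pos hq, volume_pi, Measure.restrict_pi_pi]
  exact integral_fintype_prod_eq_pow _

theorem integral_Icc_zero_one_rpow {q : ℝ} (hq0 : 0 < q) (hq1 : q ≠ 1) :
    ∫ t in Set.Icc (0 : ℝ) 1, q ^ t = (q - 1) / Real.log q := by
  have hlog : Real.log q ≠ 0 := Real.log_ne_zero_of_pos_of_ne_one hq0 hq1
  rw [integral_Icc_eq_integral_Ioc, ← intervalIntegral.integral_of_le zero_le_one,
    intervalIntegral.integral_eq_sub_of_hasDerivAt (f := fun t => q ^ t / Real.log q)]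
  · simp only [Real.rpow_one, Real.rpow_zero]
    ring
  · intro t _
    simpa [mul_div_cancel_right₀ _ hlog] using
      ((Real.hasStrictDerivAt_const_rpow hq0 t).hasDerivAt.div_const (Real.log q))
  · exact (Real.continuous_const_rpow hq0.ne').intervalIntegrable _ _

theorem indicator_univ_pi_sum_comp_perm {ι M : Type*} [Fintype ι] [Zero M] (s : Set ℝ)
    (φ : ℝ → M) (σ : Perm ι) (x : ι → ℝ) :
    (Set.univ.pi fun _ => s).indicator (fun x => φ (∑ i, x i)) (x ∘ σ)
      = (Set.univ.pi fun _ => s).indicator (fun x => φ (∑ i, x i)) x := by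
  have hmem : x ∘ σ ∈ Set.univ.pi (fun _ => s) ↔ x ∈ Set.univ.pi (fun _ => s) := by
    simp only [Set.mem_univ_pi, comp_apply]
    exact σ.forall_congr_right (q := fun i => x i ∈ s)
  by_cases hx : x ∈ Set.univ.pi (fun _ => s)
  · rw [Set.indicator_of_mem hx, Set.indicator_of_mem (hmem.2 hx), comp_def, Equiv.sum_comp σ x]
  · rw [Set.indicator_of_notMem hx, Set.indicator_of_notMem (mt hmem.1 hx)]

theorem descent_integral_general (q : ℝ) (hq0 : 0 < q) (hq1 : q < 1) (r : ℕ) :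
    ∫ x in Set.univ.pi (fun _ : Fin r => Set.Icc (0 : ℝ) 1),
        q ^ (∑ i, x i) * q ^ seqDescentNum x
      = (Real.log (1 / q) / (1 - q))⁻¹ ^ r * eulerianPoly r q / (r.factorial : ℝ) := by
  set cube := Set.univ.pi fun _ : Fin r => Set.Icc (0 : ℝ) 1
  have hcube : MeasurableSet cube := .univ_pi fun _ => measurableSet_Icc
  set f := cube.indicator fun x => q ^ ∑ i, x i
  have hf : Integrable f := by
    refine (integrable_indicator_iff hcube).2 ?_
    exact (by fun_prop (disch := positivity) : Continuous fun x : Fin r → ℝ => q ^ ∑ i, x i)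
      |>.continuousOn.integrableOn_compact (isCompact_univ_pi fun _ => isCompact_Icc)
  have hC : (Real.log (1 / q) / (1 - q))⁻¹ = (q - 1) / Real.log q := by
    rw [one_div, Real.log_inv, inv_div, ← neg_sub, neg_div_neg_eq]
  calc ∫ x in cube, q ^ (∑ i, x i) * q ^ seqDescentNum x
      = ∫ x, f x * q ^ seqDescentNum x := by
        rw [← integral_indicator hcube]
        simp only [f, Set.indicator_mul_left]
    _ = eulerianPoly r q * (∫ x, f x) / r.factorial :=
        integral_mul_pow_seqDescentNum hf (indicator_univ_pi_sum_comp_perm _ _) q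
    _ = _ := by
      rw [integral_indicator hcube, setIntegral_univ_pi_rpow_sum hq0,
        integral_Icc_zero_one_rpow hq0 hq1.ne, Fintype.card_fin, hC]
      ring

/-- `∫_{[0,1]^r} q^{x_1} ∏_{i=2}^r (q^{x_i} q^{1[x_i < x_{i-1}]}) dx = C_q^{-r} A_r(q)/r!`,
where `C_q = log(1/q)/(1-q)`. -/
theorem descent_integral (q : ℝ) (hq0 : 0 < q) (hq1 : q < 1) (r : ℕ) (hr : 1 ≤ r) :
    ∫ x in Set.univ.pi (fun _ : Fin r => Set.Icc (0 : ℝ) 1),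
        q ^ (∑ i, x i) * q ^ seqDescentNum x
      = (Real.log (1 / q) / (1 - q))⁻¹ ^ r * eulerianPoly r q / (r.factorial : ℝ) :=
  descent_integral_general q hq0 hq1 r
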